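/- Let g: ℕ → {-1, 1} be completely multiplicative, k ≥ 2 an even integer, f = μ_k² · g, and h = f ∗ g^{-1}. Then h(n) = μ(m) if n = m^k for some integer m, and h(n) = 0 otherwise. -/

import Mathlib

/-!
A completely multiplicative `g` factors out of the convolution:
`(χ_k g) ∗ (μ g) = (χ_k ∗ μ) g`, where `χ_k` is the indicator of the `k`-free numbers, and
`g (m ^ k) = g (m ^ (k / 2)) ^ 2 = 1` since `k` is even and `g = ±1`. The function `χ_k ∗ μ` is
multiplicative, and at a prime power `p ^ (a + 1)` it equals `χ_k (p ^ (a + 1)) - χ_k (p ^ a)`,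
which is `-1` if `a + 1 = k` and `0` otherwise. These are exactly the values at prime powers of
`m ^ k ↦ μ m`, extended by zero off the `k`-th powers.
-/

open Finset

namespace ArithmeticFunction

open scoped ArithmeticFunction.Moebius

theorem mul_moebius_apply_prime_pow_succ {R : Type*} [Ring R] (f : ArithmeticFunction R) {p : ℕ}
    (hp : p.Prime) (a : ℕ) : (f * μ) (p ^ (a + 1)) = f (p ^ (a + 1)) - f (p ^ a) := by
  have hμ : ∀ i, (μ (p ^ (i + 2)) : R) = 0 := fun i => by
    rw [moebius_apply_prime_pow hp (by omega), if_neg (by omega), Int.cast_zero]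
  rw [mul_apply, Nat.sum_divisorsAntidiagonal' (fun x y => f x * (μ : ArithmeticFunction R) y),
    Nat.sum_divisors_prime_pow hp, sum_range_succ', sum_range_succ']
  simp only [intCoe_apply, hμ, mul_zero, sum_const_zero, zero_add, pow_one, pow_zero,
    moebius_apply_prime hp, moebius_apply_one, Nat.div_one, Int.cast_neg, Int.cast_one]
  rw [pow_succ, Nat.mul_div_cancel _ hp.pos, mul_neg_one, mul_one, neg_add_eq_sub]

theorem sum_divisors_mul_of_map_mul {R : Type*} [CommSemiring R] {g : ℕ → R}
    (hg : ∀ m n, g (m * n) = g m * g n) (a b : ArithmeticFunction R) (n : ℕ) :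
    ∑ d ∈ n.divisors, a d * g d * (b (n / d) * g (n / d)) = (a * b) n * g n := by
  rw [mul_apply, Nat.sum_divisorsAntidiagonal (fun x y => a x * b y), sum_mul]
  refine sum_congr rfl fun d hd => ?_
  obtain ⟨e, rfl⟩ := Nat.dvd_of_mem_divisors hd
  rw [Nat.mul_div_cancel_left e (Nat.pos_of_mem_divisors hd), hg]
  ring

open scoped Classical in
noncomputable def powFreeIndicator (k : ℕ) : ArithmeticFunction ℤ :=
  ⟨fun n => if ∀ p : ℕ, p.Prime → ¬ p ^ k ∣ n then 1 else 0, by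
    simp only [ite_eq_right_iff, one_ne_zero, imp_false, not_forall, not_not]
    exact ⟨2, Nat.prime_two, dvd_zero _⟩⟩

def moebiusRoot (k : ℕ) : ArithmeticFunction ℤ :=
  ⟨fun n => ∑ m ∈ n.divisors with m ^ k = n, μ m, by simp⟩

open scoped Classical in
theorem powFreeIndicator_apply (k n : ℕ) :
    powFreeIndicator k n = if ∀ p : ℕ, p.Prime → ¬ p ^ k ∣ n then 1 else 0 := rfl

theorem moebiusRoot_apply (k n : ℕ) :
    moebiusRoot k n = ∑ m ∈ n.divisors with m ^ k = n, μ m := rfl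

theorem moebiusRoot_apply_pow {k : ℕ} (hk : k ≠ 0) (m : ℕ) :
    moebiusRoot k (m ^ k) = μ m := by
  rcases eq_or_ne m 0 with rfl | hm
  · simp [zero_pow hk]
  have hroot : {x ∈ (m ^ k).divisors | x ^ k = m ^ k} = {m} := by
    ext x
    simp only [mem_filter, Nat.mem_divisors, mem_singleton]
    constructor
    · exact fun hx => Nat.pow_left_injective hk hx.2
    · rintro rfl
      exact ⟨⟨dvd_pow_self x hk, pow_ne_zero k hm⟩, rfl⟩
  rw [moebiusRoot_apply, hroot, sum_singleton]

theorem moebiusRoot_apply_of_not_pow {k n : ℕ} (hn : ¬ ∃ m : ℕ, m ^ k = n) :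
    moebiusRoot k n = 0 := by
  rw [moebiusRoot_apply]
  exact sum_eq_zero fun m hm => absurd ⟨m, (mem_filter.mp hm).2⟩ hn

theorem powFree_mul_iff {k m n : ℕ} (hk : k ≠ 0) (hmn : m.Coprime n) :
    (∀ p : ℕ, p.Prime → ¬ p ^ k ∣ m * n) ↔
      (∀ p : ℕ, p.Prime → ¬ p ^ k ∣ m) ∧ (∀ p : ℕ, p.Prime → ¬ p ^ k ∣ n) := by
  refine ⟨fun H => ⟨fun p hp hd => H p hp (hd.mul_right n),
    fun p hp hd => H p hp (hd.mul_left m)⟩, ?_⟩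
  rintro ⟨Hm, Hn⟩ p hp hd
  rcases hp.dvd_mul.mp ((dvd_pow_self p hk).trans hd) with hpm | hpn
  · exact Hm p hp (((hmn.coprime_dvd_left hpm).pow_left k).dvd_of_dvd_mul_right hd)
  · exact Hn p hp (((hmn.symm.coprime_dvd_left hpn).pow_left k).dvd_of_dvd_mul_left hd)

theorem isMultiplicative_powFreeIndicator {k : ℕ} (hk : k ≠ 0) :
    (powFreeIndicator k).IsMultiplicative := by
  refine ⟨?_, fun {m n} hmn => ?_⟩
  · rw [powFreeIndicator_apply, if_pos]
    intro p hp hd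
    exact (Nat.one_lt_pow hk hp.one_lt).ne' (Nat.eq_one_of_dvd_one hd)
  · simp only [powFreeIndicator_apply]
    split_ifs <;> simp_all [powFree_mul_iff hk hmn]

theorem isMultiplicative_moebiusRoot {k : ℕ} (hk : k ≠ 0) :
    (moebiusRoot k).IsMultiplicative := by
  refine ⟨by simpa using moebiusRoot_apply_pow hk 1, fun {m n} hmn => ?_⟩
  by_cases hpow : ∃ c : ℕ, c ^ k = m * n
  · obtain ⟨c, hc⟩ := hpow
    obtain ⟨a, rfl⟩ := exists_eq_pow_of_mul_eq_pow (Nat.isUnit_iff.mpr hmn) hc.symm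
    obtain ⟨b, rfl⟩ := exists_eq_pow_of_mul_eq_pow (Nat.isUnit_iff.mpr hmn.symm)
      (by rw [mul_comm, hc])
    rw [← mul_pow, moebiusRoot_apply_pow hk, moebiusRoot_apply_pow hk, moebiusRoot_apply_pow hk,
      isMultiplicative_moebius.map_mul_of_coprime
        ((Nat.coprime_pow_left_iff (Nat.pos_of_ne_zero hk) _ _).mp
          ((Nat.coprime_pow_right_iff (Nat.pos_of_ne_zero hk) _ _).mp hmn))]
  · rw [moebiusRoot_apply_of_not_pow hpow]
    by_cases hm : ∃ a : ℕ, a ^ k = m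
    · obtain ⟨a, rfl⟩ := hm
      have hn : ¬ ∃ b : ℕ, b ^ k = n := fun ⟨b, hb⟩ =>
        hpow ⟨a * b, by rw [mul_pow, hb]⟩
      rw [moebiusRoot_apply_of_not_pow hn, mul_zero]
    · rw [moebiusRoot_apply_of_not_pow hm, zero_mul]

theorem powFreeIndicator_apply_prime_pow {k p : ℕ} (hk : k ≠ 0) (hp : p.Prime) (i : ℕ) :
    powFreeIndicator k (p ^ i) = if i < k then 1 else 0 := by
  rw [powFreeIndicator_apply]
  congr 1
  refine propext ⟨fun H => ?_, fun hik q hq hd => ?_⟩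
  · by_contra! hki
    exact H p hp (pow_dvd_pow p hki)
  · obtain rfl : q = p :=
      (Nat.prime_dvd_prime_iff_eq hq hp).mp (hq.dvd_of_dvd_pow ((dvd_pow_self q hk).trans hd))
    exact absurd ((Nat.pow_dvd_pow_iff_le_right hq.one_lt).mp hd) (not_le.mpr hik)

theorem moebiusRoot_apply_prime_pow_succ {k p : ℕ} (hk : k ≠ 0) (hp : p.Prime) (a : ℕ) :
    moebiusRoot k (p ^ (a + 1)) = if a + 1 = k then -1 else 0 := by
  by_cases hdvd : k ∣ a + 1
  · obtain ⟨j, hj⟩ := hdvd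
    have hj0 : j ≠ 0 := by rintro rfl; omega
    rw [hj, mul_comm, pow_mul, moebiusRoot_apply_pow hk, moebius_apply_prime_pow hp hj0]
    simp [hk]
  · rw [moebiusRoot_apply_of_not_pow, if_neg (fun h : a + 1 = k => hdvd (h ▸ dvd_rfl))]
    rintro ⟨m, hm⟩
    obtain ⟨j, -, rfl⟩ := (Nat.dvd_prime_pow hp).mp (hm ▸ dvd_pow_self m hk)
    rw [← pow_mul] at hm
    exact hdvd ⟨j, by rw [← Nat.pow_right_injective hp.two_le hm, mul_comm]⟩

theorem powFreeIndicator_mul_moebius {k : ℕ} (hk : k ≠ 0) :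
    powFreeIndicator k * μ = moebiusRoot k := by
  have hmul := (isMultiplicative_powFreeIndicator hk).mul isMultiplicative_moebius
  rw [hmul.eq_iff_eq_on_prime_powers _ _ (isMultiplicative_moebiusRoot hk)]
  rintro p (_ | a) hp
  · rw [pow_zero, hmul.map_one, (isMultiplicative_moebiusRoot hk).map_one]
  · have h := mul_moebius_apply_prime_pow_succ (powFreeIndicator k) hp a
    rw [intCoe_int] at h
    rw [h, powFreeIndicator_apply_prime_pow hk hp, powFreeIndicator_apply_prime_pow hk hp,
      moebiusRoot_apply_prime_pow_succ hk hp]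
    split_ifs <;> omega

end ArithmeticFunction

open ArithmeticFunction
open scoped ArithmeticFunction.Moebius

open scoped Classical in
theorem stmt8_general (k : ℕ) (hk : 2 ≤ k) (hkeven : Even k) (g : ℕ → ℝ)
    (hgm : ∀ m n : ℕ, g (m * n) = g m * g n)
    (hgpm : ∀ n : ℕ, 0 < n → g n = 1 ∨ g n = -1)
    (f h : ℕ → ℝ)
    (hf : ∀ n : ℕ, f n = (if ∀ p : ℕ, p.Prime → ¬ p ^ k ∣ n then 1 else 0) * g n)
    (hh : ∀ n : ℕ, h n = ∑ d ∈ n.divisors,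
      f d * ((ArithmeticFunction.moebius (n / d) : ℝ) * g (n / d))) :
    (∀ m : ℕ, h (m ^ k) = (ArithmeticFunction.moebius m : ℝ)) ∧
    (∀ n : ℕ, (¬ ∃ m : ℕ, n = m ^ k) → h n = 0) := by
  have hk0 : k ≠ 0 := by omega
  have hh' : ∀ n, h n = moebiusRoot k n * g n := fun n => by
    have hf' : ∀ d, f d = (powFreeIndicator k : ArithmeticFunction ℝ) d * g d := fun d => by
      rw [hf, intCoe_apply, powFreeIndicator_apply, Int.cast_ite, Int.cast_one, Int.cast_zero]
    simp_rw [hh, hf', ← intCoe_apply (R := ℝ) (f := μ), sum_divisors_mul_of_map_mul hgm,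
      ← intCoe_mul, powFreeIndicator_mul_moebius hk0, intCoe_apply]
  have hg_pow : ∀ m, 0 < m → g (m ^ k) = 1 := fun m hm => by
    obtain ⟨j, rfl⟩ := hkeven
    rw [pow_add, hgm]
    rcases hgpm (m ^ j) (pow_pos hm j) with h1 | h1 <;> rw [h1] <;> norm_num
  refine ⟨fun m => ?_, fun n hn => ?_⟩
  · rcases Nat.eq_zero_or_pos m with rfl | hm
    · simp [hh', zero_pow hk0]
    · rw [hh', moebiusRoot_apply_pow hk0, hg_pow m hm, mul_one]
  · rw [hh', moebiusRoot_apply_of_not_pow fun ⟨m, hm⟩ => hn ⟨m, hm.symm⟩, Int.cast_zero,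
      zero_mul]

open scoped Classical in
theorem stmt8 (k : ℕ) (hk : 2 ≤ k) (hkeven : Even k) (g : ℕ → ℝ)
    (hg1 : g 1 = 1) (hgm : ∀ m n : ℕ, g (m * n) = g m * g n)
    (hgpm : ∀ n : ℕ, 0 < n → g n = 1 ∨ g n = -1)
    (f h : ℕ → ℝ)
    (hf : ∀ n : ℕ, f n = (if ∀ p : ℕ, p.Prime → ¬ p ^ k ∣ n then 1 else 0) * g n)
    (hh : ∀ n : ℕ, h n = ∑ d ∈ n.divisors,
      f d * ((ArithmeticFunction.moebius (n / d) : ℝ) * g (n / d))) :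
    (∀ m : ℕ, h (m ^ k) = (ArithmeticFunction.moebius m : ℝ)) ∧
    (∀ n : ℕ, (¬ ∃ m : ℕ, n = m ^ k) → h n = 0) :=
  stmt8_general k hk hkeven g hgm hgpm f h hf hh
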